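/- arXiv:0907.3338 — 3 statements merged into one kernel-verified Lean document; each statement's English description precedes it below -/
import Mathlib

section
/- Fix β ∈ ℝ, α ≥ 0, multipliers U : V_S → ℝ, and x ∈ [0,1]^{E_L}. Then the supremum over all y : V_S → ℝ with 0 ≤ y_{(e,e')} ≤ x_e (for every (e,e') ∈ V_S) of the quantity α wᵀ x + (β/2) Σ_{(e,e') ∈ V_S} y_{(e,e')} + Σ_{(e,e') ∈ V_S} U_{(e,e')} (y_{(e,e')} − y_{(e',e)}) is attained and equals Σ_{e ∈ E_L} x_e · w'_e, where w'_e = α w_e + Σ_{e' : (e,e') ∈ V_S} max(0, β/2 + U_{(e,e')} − U_{(e',e)}). In particular, for fixed U the Lagrangian relaxation NALLP reduces to a linear objective w'ᵀ x in x alone. -/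
/-! Swapping the summation index by the involution `(e,e') ↦ (e',e)` turns the multiplier term
into `Σ_s (U_s - U_{swap s}) y_s`, so the objective is `α wᵀx + Σ_s c_s y_s` with
`c_s = β/2 + U_s - U_{swap s}`. This is separable over the box `0 ≤ y_s ≤ x_e`, hence maximised
by `y_s = x_e` when `c_s ≥ 0` and `y_s = 0` otherwise; grouping the optimum by the first edge
of `s` gives `Σ_e x_e w'_e`. -/

open Matrix Classical

noncomputable section

/-- Two edges `e = (i,i')` and `e' = (j,j')` of the bipartite graph `L`
form a square if `(i,j) ∈ E_A` and `(i',j') ∈ E_B`. -/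
def Square {VA VB : Type*} (A : SimpleGraph VA) (B : SimpleGraph VB)
    (e e' : VA × VB) : Prop :=
  A.Adj e.1 e'.1 ∧ B.Adj e.2 e'.2

/-- The symmetric 0-1 matrix `S` indexed by the edges of `L`, with
`S_{e,e'} = 1` iff `e` and `e'` form a square. -/
def sqMatrix {VA VB : Type*} (A : SimpleGraph VA) (B : SimpleGraph VB)
    (EL : Finset (VA × VB)) : Matrix ↥EL ↥EL ℝ :=
  fun e e' => if Square A B e.1 e'.1 then 1 else 0

/-- `x` indexed by `E_L` satisfies the matching constraints: at every vertex
of `L`, the sum of `x_e` over incident edges is at most `1`. -/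
def MatchCon {VA VB : Type*} (EL : Finset (VA × VB)) (x : ↥EL → ℝ) : Prop :=
  (∀ i : VA, ∑ e : ↥EL, (if (e : VA × VB).1 = i then x e else 0) ≤ 1) ∧
  (∀ i' : VB, ∑ e : ↥EL, (if (e : VA × VB).2 = i' then x e else 0) ≤ 1)

/-- a 0/1-valued vector -/
def IsBinary {ι : Type*} (x : ι → ℝ) : Prop := ∀ i, x i = 0 ∨ x i = 1

/-- `V_S`: the set of ordered pairs of edges of `E_L` that form a square. -/
abbrev VS {VA VB : Type*} (A : SimpleGraph VA) (B : SimpleGraph VB)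
    (EL : Finset (VA × VB)) : Type _ :=
  {p : ↥EL × ↥EL // Square A B p.1.1 p.2.1}

instance {VA VB : Type*} (A : SimpleGraph VA) (B : SimpleGraph VB)
    (EL : Finset (VA × VB)) : Fintype (VS A B EL) :=
  Fintype.ofFinite _

/-- the map `(e,e') ↦ (e',e)` on `V_S` (well defined by symmetry of `V_S`). -/
def VSswap {VA VB : Type*} {A : SimpleGraph VA} {B : SimpleGraph VB}
    {EL : Finset (VA × VB)} (s : VS A B EL) : VS A B EL :=
  ⟨(s.1.2, s.1.1), s.2.1.symm, s.2.2.symm⟩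

/-- The network alignment objective `f(x) = α wᵀ x + (β/2) xᵀ S x`. -/
def netObj {VA VB : Type*} (A : SimpleGraph VA) (B : SimpleGraph VB)
    (EL : Finset (VA × VB)) (α β : ℝ) (w : ↥EL → ℝ) (x : ↥EL → ℝ) : ℝ :=
  α * (w ⬝ᵥ x) + β / 2 * (x ⬝ᵥ (sqMatrix A B EL) *ᵥ x)

/-- The probability distribution `p(x_E, x_S)` on the factor graph. -/
def pdist {VA VB : Type*} [Fintype VA] [Fintype VB]
    (A : SimpleGraph VA) (B : SimpleGraph VB) (EL : Finset (VA × VB))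
    (α β : ℝ) (w : ↥EL → ℝ) (xE : ↥EL → ℝ) (xS : VS A B EL → ℝ) : ℝ :=
  Real.exp (α * (w ⬝ᵥ xE) + β / 2 * ∑ s : VS A B EL, xS s) *
    (∏ i : VA,
      if (∑ e : ↥EL, if (e : VA × VB).1 = i then xE e else 0) ≤ 1 then (1 : ℝ) else 0) *
    (∏ i' : VB,
      if (∑ e : ↥EL, if (e : VA × VB).2 = i' then xE e else 0) ≤ 1 then (1 : ℝ) else 0) *
    (∏ s : VS A B EL, if xS s = xE s.1.1 * xE s.1.2 then (1 : ℝ) else 0)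

theorem isGreatest_add_sum_mul_box {ι R : Type*} [Fintype ι] [CommRing R] [LinearOrder R]
    [IsOrderedRing R] (a : R) (c u : ι → R) (hu : ∀ i, 0 ≤ u i) :
    IsGreatest {v : R | ∃ y : ι → R, (∀ i, 0 ≤ y i ∧ y i ≤ u i) ∧ v = a + ∑ i, y i * c i}
      (a + ∑ i, u i * max 0 (c i)) := by
  constructor
  · refine ⟨fun i => if 0 ≤ c i then u i else 0, fun i => ?_, ?_⟩
    · dsimp only
      split_ifs <;> simp [hu i]
    · congr 1
      refine Finset.sum_congr rfl fun i _ => ?_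
      dsimp only
      split_ifs with h
      · rw [max_eq_right h]
      · rw [max_eq_left (not_le.mp h).le, zero_mul, mul_zero]
  · rintro v ⟨y, hy, rfl⟩
    refine add_le_add_right (Finset.sum_le_sum fun i _ => ?_) a
    calc y i * c i ≤ y i * max 0 (c i) := mul_le_mul_of_nonneg_left (le_max_right _ _) (hy i).1
      _ ≤ u i * max 0 (c i) := mul_le_mul_of_nonneg_right (hy i).2 (le_max_left _ _)

theorem Function.Involutive.sum_mul_sub_comp {ι R : Type*} [Fintype ι] [CommRing R]
    {σ : ι → ι} (hσ : Function.Involutive σ) (U y : ι → R) :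
    ∑ i, U i * (y i - y (σ i)) = ∑ i, (U i - U (σ i)) * y i := by
  have hreindex : ∑ i, U i * y (σ i) = ∑ i, U (σ i) * y i :=
    Fintype.sum_bijective σ hσ.bijective _ _ fun i => by rw [hσ]
  simp only [mul_sub, sub_mul, Finset.sum_sub_distrib, hreindex]

theorem sum_mul_sum_ite_eq {ι κ R : Type*} [Fintype ι] [Fintype κ] [DecidableEq κ]
    [CommSemiring R] (g : ι → κ) (x : κ → R) (m : ι → R) :
    ∑ k, x k * ∑ i, (if g i = k then m i else 0) = ∑ i, x (g i) * m i := by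
  simp only [Finset.mul_sum, mul_ite, mul_zero]
  rw [Finset.sum_comm]
  simp

theorem VSswap_involutive {VA VB : Type*} {A : SimpleGraph VA} {B : SimpleGraph VB}
    {EL : Finset (VA × VB)} : Function.Involutive (VSswap (A := A) (B := B) (EL := EL)) :=
  fun _ => rfl

theorem stmt8_general {VA VB : Type*}
    (A : SimpleGraph VA) (B : SimpleGraph VB) (EL : Finset (VA × VB))
    (β : ℝ) (α : ℝ)
    (w : ↥EL → ℝ)
    (U : VS A B EL → ℝ)
    (x : ↥EL → ℝ) (hx : ∀ e, 0 ≤ x e ∧ x e ≤ 1) :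
    IsGreatest {v : ℝ | ∃ y : VS A B EL → ℝ,
        (∀ s : VS A B EL, 0 ≤ y s ∧ y s ≤ x s.1.1) ∧
        v = α * (w ⬝ᵥ x) + β / 2 * ∑ s : VS A B EL, y s +
          ∑ s : VS A B EL, U s * (y s - y (VSswap s))}
      (∑ e : ↥EL, x e * (α * w e +
        ∑ s : VS A B EL,
          if s.1.1 = e then max 0 (β / 2 + U s - U (VSswap s)) else 0)) := by
  obtain ⟨c, hc⟩ : ∃ c : VS A B EL → ℝ, ∀ s, c s = β / 2 + U s - U (VSswap s) :=
    ⟨_, fun _ => rfl⟩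
  have hobjective : ∀ y : VS A B EL → ℝ, α * (w ⬝ᵥ x) + β / 2 * ∑ s, y s +
      ∑ s, U s * (y s - y (VSswap s)) = α * (w ⬝ᵥ x) + ∑ s, y s * c s := by
    intro y
    rw [add_assoc, VSswap_involutive.sum_mul_sub_comp, Finset.mul_sum, ← Finset.sum_add_distrib]
    exact congrArg _ (Finset.sum_congr rfl fun s _ => by rw [hc]; ring)
  have hvalue : ∑ e, x e * (α * w e + ∑ s : VS A B EL, if s.1.1 = e then max 0 (c s) else 0)
      = α * (w ⬝ᵥ x) + ∑ s, x s.1.1 * max 0 (c s) := by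
    simp only [mul_add, Finset.sum_add_distrib]
    rw [sum_mul_sum_ite_eq, dotProduct, Finset.mul_sum]
    exact congrArg (· + _) (Finset.sum_congr rfl fun e _ => by ring)
  simp only [← hc, hobjective, hvalue]
  exact isGreatest_add_sum_mul_box _ c _ fun e => (hx e.1.1).1

/-- for fixed `β`, `α ≥ 0`, multipliers `U` and `x ∈ [0,1]^{E_L}`,
the supremum over `y` with `0 ≤ y_{(e,e')} ≤ x_e` of
`α wᵀ x + (β/2) Σ y + Σ U_{(e,e')}(y_{(e,e')} − y_{(e',e)})` is attained and
equals `Σ_e x_e w'_e`, where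
`w'_e = α w_e + Σ_{e' : (e,e') ∈ V_S} max(0, β/2 + U_{(e,e')} − U_{(e',e)})`. -/
theorem stmt8 {VA VB : Type*}
    (A : SimpleGraph VA) (B : SimpleGraph VB) (EL : Finset (VA × VB))
    (β : ℝ) (α : ℝ) (hα : 0 ≤ α)
    (w : ↥EL → ℝ) (hw : ∀ e, 0 ≤ w e)
    (U : VS A B EL → ℝ)
    (x : ↥EL → ℝ) (hx : ∀ e, 0 ≤ x e ∧ x e ≤ 1) :
    IsGreatest {v : ℝ | ∃ y : VS A B EL → ℝ,
        (∀ s : VS A B EL, 0 ≤ y s ∧ y s ≤ x s.1.1) ∧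
        v = α * (w ⬝ᵥ x) + β / 2 * ∑ s : VS A B EL, y s +
          ∑ s : VS A B EL, U s * (y s - y (VSswap s))}
      (∑ e : ↥EL, x e * (α * w e +
        ∑ s : VS A B EL,
          if s.1.1 = e then max 0 (β / 2 + U s - U (VSswap s)) else 0)) :=
  stmt8_general A B EL β α w U x hx
end
end

section
/- For every U : V_S → ℝ, the tightened Lagrangian relaxation NATLP is sandwiched between the integer optimum and the looser relaxation: (maximum of f(x) = α wᵀ x + (β/2) xᵀ S x over binary x satisfying the matching constraints) ≤ (supremum of the NALLP objective over NATLP-feasible pairs) ≤ (supremum of the NALLP objective over NALLP-feasible pairs). In particular, every binary feasible x of NAQP together with y_{(e,e')} = x_e · x_{e'} satisfies the additional row-matching constraints of NATLP and attains NALLP objective value f(x). -/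
open Matrix Classical

noncomputable section

/-- NALLP feasibility: `x ∈ [0,1]^{E_L}`, `y ∈ [0,1]^{V_S}`, `x` satisfies the
matching constraints, and `y_{(e,e')} ≤ x_e` (no symmetry constraint). -/
def NALLPFeasible {VA VB : Type*} (A : SimpleGraph VA) (B : SimpleGraph VB)
    (EL : Finset (VA × VB)) (x : ↥EL → ℝ) (y : VS A B EL → ℝ) : Prop :=
  (∀ e, 0 ≤ x e ∧ x e ≤ 1) ∧ (∀ s, 0 ≤ y s ∧ y s ≤ 1) ∧ MatchCon EL x ∧
  (∀ s : VS A B EL, y s ≤ x s.1.1)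

/-- the NALLP objective with Lagrange multipliers `U`:
`α wᵀ x + (β/2) Σ_{V_S} y + Σ_{(e,e') ∈ V_S} U_{(e,e')} (y_{(e,e')} − y_{(e',e)})` -/
def nallpObj {VA VB : Type*} (A : SimpleGraph VA) (B : SimpleGraph VB)
    (EL : Finset (VA × VB)) (U : VS A B EL → ℝ) (α β : ℝ) (w : ↥EL → ℝ)
    (x : ↥EL → ℝ) (y : VS A B EL → ℝ) : ℝ :=
  α * (w ⬝ᵥ x) + β / 2 * ∑ s : VS A B EL, y s +
    ∑ s : VS A B EL, U s * (y s - y (VSswap s))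

/-- NATLP feasibility: NALLP feasibility together with the additional
row-matching constraints on `y`. -/
def NATLPFeasible {VA VB : Type*} (A : SimpleGraph VA) (B : SimpleGraph VB)
    (EL : Finset (VA × VB)) (x : ↥EL → ℝ) (y : VS A B EL → ℝ) : Prop :=
  NALLPFeasible A B EL x y ∧
  (∀ (e : ↥EL) (j' : VB),
    ∑ s : VS A B EL,
      (if s.1.1 = e ∧ (s.1.2 : VA × VB).2 = j' then y s else 0) ≤ 1) ∧
  (∀ (e : ↥EL) (j : VA),
    ∑ s : VS A B EL,
      (if s.1.1 = e ∧ (s.1.2 : VA × VB).1 = j then y s else 0) ≤ 1)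

/-! A binary matching `x` lifts to `y_{(e,e')} = x_e x_{e'}`. This `y` is symmetric, so the
multiplier term of the NALLP objective vanishes and the objective equals `f(x)`; the row
constraints of NATLP hold because, for fixed `e` and `j'`, the sum of `x_e x_{(j,j')}` is at most
the matching sum of `x` at `j'`. The two `sSup` inequalities are then monotonicity of `sSup`,
which needs the objective to be bounded on the box `[0,1]^{E_L} × [0,1]^{V_S}` (an unbounded set
would have the junk supremum `0`). -/

lemma IsBinary.mem_Icc {ι : Type*} {x : ι → ℝ} (hx : IsBinary x) (i : ι) :
    x i ∈ Set.Icc 0 1 := by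
  rcases hx i with h | h <;> simp [h]

lemma mul_le_abs_of_abs_le_one {c z : ℝ} (hz : |z| ≤ 1) : c * z ≤ |c| := calc
  c * z ≤ |c| * |z| := (le_abs_self _).trans (abs_mul _ _).le
  _ ≤ |c| := mul_le_of_le_one_right (abs_nonneg _) hz

section NetworkAlignment

variable {VA VB : Type*} {A : SimpleGraph VA} {B : SimpleGraph VB} {EL : Finset (VA × VB)}

lemma sum_VS_eq_sum_ite (f : ↥EL × ↥EL → ℝ) :
    ∑ s : VS A B EL, f s.1 = ∑ p, if Square A B p.1.1 p.2.1 then f p else 0 := by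
  rw [← Finset.sum_filter]
  exact (Finset.sum_subtype _ (by simp) f).symm

lemma sum_VS_le_sum_prod (f : ↥EL × ↥EL → ℝ) (hf : ∀ p, 0 ≤ f p) :
    ∑ s : VS A B EL, f s.1 ≤ ∑ p, f p := by
  rw [sum_VS_eq_sum_ite]
  exact Finset.sum_le_sum fun p _ => by split_ifs <;> simp [hf p]

lemma dotProduct_sqMatrix_mulVec (x : ↥EL → ℝ) :
    x ⬝ᵥ sqMatrix A B EL *ᵥ x = ∑ s : VS A B EL, x s.1.1 * x s.1.2 := by
  simp only [sum_VS_eq_sum_ite (fun p => x p.1 * x p.2), Fintype.sum_prod_type, dotProduct,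
    mulVec, sqMatrix, Finset.mul_sum]
  exact Finset.sum_congr rfl fun a _ => Finset.sum_congr rfl fun b _ => by split_ifs <;> ring

lemma sum_VS_row_mul_le_one {x : ↥EL → ℝ} (hx : ∀ e, x e ∈ Set.Icc 0 1) (e : ↥EL)
    (P : ↥EL → Prop) (hP : ∑ b, (if P b then x b else 0) ≤ 1) :
    ∑ s : VS A B EL, (if s.1.1 = e ∧ P s.1.2 then x s.1.1 * x s.1.2 else 0) ≤ 1 := by
  have hnonneg : ∀ p : ↥EL × ↥EL, 0 ≤ if p.1 = e ∧ P p.2 then x p.1 * x p.2 else 0 :=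
    fun p => by split_ifs; exacts [mul_nonneg (hx _).1 (hx _).1, le_rfl]
  calc _ ≤ ∑ p : ↥EL × ↥EL, if p.1 = e ∧ P p.2 then x p.1 * x p.2 else 0 :=
        sum_VS_le_sum_prod _ hnonneg
    _ = ∑ b, if P b then x e * x b else 0 := by
        rw [Fintype.sum_prod_type, Fintype.sum_eq_single e fun a ha => by simp [ha]]
        simp
    _ ≤ ∑ b, if P b then x b else 0 :=
        Finset.sum_le_sum fun b _ => by
          split_ifs
          exacts [mul_le_of_le_one_left (hx b).1 (hx e).2, le_rfl]
    _ ≤ 1 := hP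

lemma natlpFeasible_of_isBinary {x : ↥EL → ℝ} (hx : IsBinary x) (hm : MatchCon EL x) :
    NATLPFeasible A B EL x (fun s => x s.1.1 * x s.1.2) := by
  have hIcc := hx.mem_Icc
  refine ⟨⟨hIcc, fun s => ⟨?_, ?_⟩, hm, fun s => ?_⟩,
    fun e j' => sum_VS_row_mul_le_one hIcc e _ (hm.2 j'),
    fun e j => sum_VS_row_mul_le_one hIcc e _ (hm.1 j)⟩
  · exact mul_nonneg (hIcc _).1 (hIcc _).1
  · exact mul_le_one₀ (hIcc _).2 (hIcc _).1 (hIcc _).2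
  · exact mul_le_of_le_one_right (hIcc _).1 (hIcc _).2

lemma nallpObj_mul_eq_netObj (U : VS A B EL → ℝ) (α β : ℝ) (w x : ↥EL → ℝ) :
    nallpObj A B EL U α β w x (fun s => x s.1.1 * x s.1.2) = netObj A B EL α β w x := by
  have hswap : ∀ s : VS A B EL,
      U s * (x s.1.1 * x s.1.2 - x (VSswap s).1.1 * x (VSswap s).1.2) = 0 :=
    fun s => by simp [VSswap, mul_comm]
  simp only [nallpObj, netObj, dotProduct_sqMatrix_mulVec, hswap, Finset.sum_const_zero,
    add_zero]

lemma nallpObj_le_of_nallpFeasible (U : VS A B EL → ℝ) (α β : ℝ) (w : ↥EL → ℝ)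
    {x : ↥EL → ℝ} {y : VS A B EL → ℝ} (hf : NALLPFeasible A B EL x y) :
    nallpObj A B EL U α β w x y ≤
      ∑ e, |α * w e| + ∑ _s : VS A B EL, |β / 2| + ∑ s, |U s| := by
  obtain ⟨hx, hy, -, -⟩ := hf
  have habs : ∀ {t : ℝ}, t ∈ Set.Icc (0 : ℝ) 1 → |t| ≤ 1 := fun ht =>
    abs_le.2 ⟨by linarith [ht.1], ht.2⟩
  unfold nallpObj
  rw [dotProduct, Finset.mul_sum, Finset.mul_sum]
  simp only [← mul_assoc]
  gcongr
  · exact mul_le_abs_of_abs_le_one (habs (hx _))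
  · exact mul_le_abs_of_abs_le_one (habs (hy _))
  · exact mul_le_abs_of_abs_le_one
      (abs_sub_le_of_nonneg_of_le (hy _).1 (hy _).2 (hy _).1 (hy _).2)

lemma bddAbove_nallpObj (U : VS A B EL → ℝ) (α β : ℝ) (w : ↥EL → ℝ) :
    BddAbove {v : ℝ | ∃ (x : ↥EL → ℝ) (y : VS A B EL → ℝ),
      NALLPFeasible A B EL x y ∧ v = nallpObj A B EL U α β w x y} := by
  refine ⟨∑ e, |α * w e| + ∑ _s : VS A B EL, |β / 2| + ∑ s, |U s|, ?_⟩
  rintro v ⟨x, y, hf, rfl⟩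
  exact nallpObj_le_of_nallpFeasible U α β w hf

end NetworkAlignment

theorem stmt10_general {VA VB : Type*}
    (A : SimpleGraph VA) (B : SimpleGraph VB) (EL : Finset (VA × VB))
    (α β : ℝ)
    (w : ↥EL → ℝ)
    (U : VS A B EL → ℝ) :
    (∀ x : ↥EL → ℝ, IsBinary x → MatchCon EL x →
      NATLPFeasible A B EL x (fun s => x s.1.1 * x s.1.2) ∧
      nallpObj A B EL U α β w x (fun s => x s.1.1 * x s.1.2) =
        netObj A B EL α β w x) ∧
    (∀ x : ↥EL → ℝ, IsBinary x → MatchCon EL x →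
      netObj A B EL α β w x ≤
        sSup {v : ℝ | ∃ (x' : ↥EL → ℝ) (y' : VS A B EL → ℝ),
          NATLPFeasible A B EL x' y' ∧ v = nallpObj A B EL U α β w x' y'}) ∧
    sSup {v : ℝ | ∃ (x' : ↥EL → ℝ) (y' : VS A B EL → ℝ),
        NATLPFeasible A B EL x' y' ∧ v = nallpObj A B EL U α β w x' y'} ≤
      sSup {v : ℝ | ∃ (x' : ↥EL → ℝ) (y' : VS A B EL → ℝ),
        NALLPFeasible A B EL x' y' ∧ v = nallpObj A B EL U α β w x' y'} := by
  have hlift : ∀ x : ↥EL → ℝ, IsBinary x → MatchCon EL x →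
      NATLPFeasible A B EL x (fun s => x s.1.1 * x s.1.2) ∧
      nallpObj A B EL U α β w x (fun s => x s.1.1 * x s.1.2) = netObj A B EL α β w x :=
    fun x hx hm => ⟨natlpFeasible_of_isBinary hx hm, nallpObj_mul_eq_netObj U α β w x⟩
  have hsubset : {v : ℝ | ∃ (x' : ↥EL → ℝ) (y' : VS A B EL → ℝ),
        NATLPFeasible A B EL x' y' ∧ v = nallpObj A B EL U α β w x' y'} ⊆
      {v : ℝ | ∃ (x' : ↥EL → ℝ) (y' : VS A B EL → ℝ),
        NALLPFeasible A B EL x' y' ∧ v = nallpObj A B EL U α β w x' y'} := by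
    rintro v ⟨x', y', hf, rfl⟩
    exact ⟨x', y', hf.1, rfl⟩
  have hbdd := bddAbove_nallpObj U α β w
  refine ⟨hlift, fun x hx hm => ?_, ?_⟩
  · obtain ⟨hfeas, hobj⟩ := hlift x hx hm
    exact le_csSup (hbdd.mono hsubset) ⟨x, _, hfeas, hobj.symm⟩
  · have hzero : IsBinary (0 : ↥EL → ℝ) := fun _ => Or.inl rfl
    obtain ⟨hfeas, -⟩ := hlift 0 hzero (by simp [MatchCon])
    exact csSup_le_csSup hbdd ⟨_, 0, _, hfeas, rfl⟩ hsubset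

/-- for every `U`, the tightened relaxation NATLP is sandwiched
between the integer optimum and the looser relaxation NALLP; in particular,
every binary feasible `x` of NAQP together with `y_{(e,e')} = x_e · x_{e'}`
is NATLP-feasible and attains NALLP objective value
`f(x) = α wᵀ x + (β/2) xᵀ S x`. -/
theorem stmt10 {VA VB : Type*}
    (A : SimpleGraph VA) (B : SimpleGraph VB) (EL : Finset (VA × VB))
    (α β : ℝ) (hα : 0 ≤ α) (hβ : 0 ≤ β)
    (w : ↥EL → ℝ) (hw : ∀ e, 0 ≤ w e)
    (U : VS A B EL → ℝ) :
    (∀ x : ↥EL → ℝ, IsBinary x → MatchCon EL x →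
      NATLPFeasible A B EL x (fun s => x s.1.1 * x s.1.2) ∧
      nallpObj A B EL U α β w x (fun s => x s.1.1 * x s.1.2) =
        netObj A B EL α β w x) ∧
    (∀ x : ↥EL → ℝ, IsBinary x → MatchCon EL x →
      netObj A B EL α β w x ≤
        sSup {v : ℝ | ∃ (x' : ↥EL → ℝ) (y' : VS A B EL → ℝ),
          NATLPFeasible A B EL x' y' ∧ v = nallpObj A B EL U α β w x' y'}) ∧
    sSup {v : ℝ | ∃ (x' : ↥EL → ℝ) (y' : VS A B EL → ℝ),
        NATLPFeasible A B EL x' y' ∧ v = nallpObj A B EL U α β w x' y'} ≤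
      sSup {v : ℝ | ∃ (x' : ↥EL → ℝ) (y' : VS A B EL → ℝ),
        NALLPFeasible A B EL x' y' ∧ v = nallpObj A B EL U α β w x' y'} :=
  stmt10_general A B EL α β w U
end
end

section
/- Max-product message through a matching-constraint function node simplifies to a log-likelihood formula: let K be a finite nonempty set, let ν_k(0), ν_k(1) > 0 for each k ∈ K, let α, w₀ ∈ ℝ and w_k ∈ ℝ for k ∈ K, and for x ∈ {0,1} define ν̂(x) = max over (x_k)_{k∈K} ∈ {0,1}^K with x + Σ_{k∈K} x_k ≤ 1 of exp(α(w₀ x + Σ_{k∈K} w_k x_k)) · ∏_{k∈K} ν_k(x_k). Then log(ν̂(1)/ν̂(0)) = α w₀ − max(0, max_{k∈K} (α w_k + m_k)), where m_k = log(ν_k(1)/ν_k(0)). -/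
/-!
For a binary value `t`, `ν(t) = ν(0) · exp (m t)` with `m = log (ν(1) / ν(0))`, so every
candidate product equals `∏ₖ νₖ(0) · exp (α w₀ x + ∑ₖ cₖ xₖ)` with `cₖ = α wₖ + mₖ`: the
maximisation happens in the exponent and is linear. The constraint `x + ∑ xₖ ≤ 1` forces
`(xₖ) = 0` when `x = 1`, and `(xₖ) = 0` or a unit vector `eₖ` when `x = 0`, so the exponents
maximise to `α w₀` and `max 0 (maxₖ cₖ)` respectively; the common factor cancels in the ratio.
-/

open Finset Real

section Binary

variable {ι R : Type*} [Ring R] [LinearOrder R] [IsStrictOrderedRing R] {x : ι → R}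

lemma nonneg_of_binary (hx : ∀ i, x i = 0 ∨ x i = 1) (i : ι) : 0 ≤ x i := by
  rcases hx i with h | h <;> simp [h]

variable [Fintype ι]

lemma eq_zero_of_binary_of_sum_nonpos (hx : ∀ i, x i = 0 ∨ x i = 1) (hs : ∑ i, x i ≤ 0) :
    x = 0 := by
  have hnn : ∀ i ∈ univ, 0 ≤ x i := fun i _ => nonneg_of_binary hx i
  funext i
  exact (sum_eq_zero_iff_of_nonneg hnn).1 (hs.antisymm (sum_nonneg hnn)) i (mem_univ i)

lemma eq_zero_or_eq_single_of_binary_of_sum_le_one [DecidableEq ι]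
    (hx : ∀ i, x i = 0 ∨ x i = 1) (hs : ∑ i, x i ≤ 1) :
    x = 0 ∨ ∃ i, x = Pi.single i 1 := by
  by_cases h : x = 0
  · exact .inl h
  obtain ⟨i, hi⟩ : ∃ i, x i ≠ 0 := by simpa [funext_iff] using h
  have hxi : x i = 1 := (hx i).resolve_left hi
  -- `x - Pi.single i 1` is again binary, with sum `∑ x - 1 ≤ 0`.
  refine .inr ⟨i, sub_eq_zero.1 (eq_zero_of_binary_of_sum_nonpos (fun j => ?_) ?_)⟩
  · by_cases hj : j = i
    · subst hj; simp [hxi]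
    · simpa [Pi.single_apply, hj] using hx j
  · simpa [sum_sub_distrib] using hs

lemma isGreatest_sum_mul_binary_of_sum_le_one [Nonempty ι] (c : ι → R) :
    IsGreatest {s | ∃ x : ι → R, (∀ i, x i = 0 ∨ x i = 1) ∧ ∑ i, x i ≤ 1 ∧
      s = ∑ i, c i * x i} (max 0 (univ.sup' univ_nonempty c)) := by
  classical
  refine ⟨?_, ?_⟩
  · rcases le_total (univ.sup' univ_nonempty c) 0 with hc | hc
    · exact ⟨0, fun _ => .inl rfl, by simp, by simp [hc]⟩
    · obtain ⟨i, -, hi⟩ := exists_mem_eq_sup' univ_nonempty c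
      refine ⟨Pi.single i 1, fun j => ?_, by simp, ?_⟩
      · by_cases hj : j = i <;> simp [hj]
      · rw [max_eq_right hc, hi]
        simp [Pi.single_apply]
  · rintro s ⟨x, hx, hs, rfl⟩
    rcases eq_zero_or_eq_single_of_binary_of_sum_le_one hx hs with rfl | ⟨i, rfl⟩
    · simp
    · refine le_max_of_le_right (le_of_eq_of_le ?_ (le_sup' c (mem_univ i)))
      simp [Pi.single_apply]

end Binary

lemma eq_mul_exp_log_div_mul_of_binary {f : ℝ → ℝ} (h0 : 0 < f 0) (h1 : 0 < f 1) {t : ℝ}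
    (ht : t = 0 ∨ t = 1) : f t = f 0 * exp (log (f 1 / f 0) * t) := by
  rcases ht with rfl | rfl
  · simp
  · rw [mul_one, exp_log (div_pos h1 h0)]
    field_simp

lemma prod_apply_binary {ι : Type*} [Fintype ι] {ν : ι → ℝ → ℝ} (h0 : ∀ i, 0 < ν i 0)
    (h1 : ∀ i, 0 < ν i 1) {x : ι → ℝ} (hx : ∀ i, x i = 0 ∨ x i = 1) :
    ∏ i, ν i (x i) = (∏ i, ν i 0) * exp (∑ i, log (ν i 1 / ν i 0) * x i) := by
  rw [exp_sum, ← prod_mul_distrib]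
  exact prod_congr rfl fun i _ => eq_mul_exp_log_div_mul_of_binary (h0 i) (h1 i) (hx i)

/-- the max-product message through a matching-constraint
function node simplifies to a log-likelihood formula: with
`nuHat(x) = max over binary (x_k)_{k∈K} with x + Σ x_k ≤ 1 of
exp(α (w₀ x + Σ w_k x_k)) ∏ ν_k(x_k)`, one has
`log(nuHat(1)/nuHat(0)) = α w₀ − max(0, max_k (α w_k + m_k))` where
`m_k = log(ν_k(1)/ν_k(0))`. -/
theorem stmt13 {K : Type*} [Fintype K] [Nonempty K]
    (ν : K → ℝ → ℝ) (hν0 : ∀ k, 0 < ν k 0) (hν1 : ∀ k, 0 < ν k 1)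
    (α w₀ : ℝ) (w : K → ℝ)
    (nuHat : ℝ → ℝ)
    (hnuHat : ∀ x : ℝ, x = 0 ∨ x = 1 →
      IsGreatest {v : ℝ | ∃ xk : K → ℝ, (∀ k, xk k = 0 ∨ xk k = 1) ∧
        x + ∑ k, xk k ≤ 1 ∧
        v = Real.exp (α * (w₀ * x + ∑ k, w k * xk k)) * ∏ k, ν k (xk k)}
      (nuHat x)) :
    Real.log (nuHat 1 / nuHat 0) =
      α * w₀ - max 0 (Finset.univ.sup' Finset.univ_nonempty
        (fun k => α * w k + Real.log (ν k 1 / ν k 0))) := by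
  set c : K → ℝ := fun k => α * w k + log (ν k 1 / ν k 0)
  set P := ∏ k, ν k 0
  have hP : 0 < P := prod_pos fun k _ => hν0 k
  have hvalue : ∀ x (xk : K → ℝ), (∀ k, xk k = 0 ∨ xk k = 1) →
      exp (α * (w₀ * x + ∑ k, w k * xk k)) * ∏ k, ν k (xk k) =
        P * exp (α * w₀ * x + ∑ k, c k * xk k) := by
    intro x xk hxk
    rw [prod_apply_binary hν0 hν1 hxk, mul_left_comm, ← exp_add]
    congr 2
    simp only [c, mul_add, add_mul, sum_add_distrib, mul_sum, mul_assoc]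
    ring
  have h1 : nuHat 1 = P * exp (α * w₀) := by
    obtain ⟨xk, hxk, hs, hv⟩ := (hnuHat 1 (.inr rfl)).1
    rw [hv, hvalue 1 xk hxk, eq_zero_of_binary_of_sum_nonpos hxk (by linarith)]
    simp
  have h0 : nuHat 0 = P * exp (max 0 (univ.sup' univ_nonempty c)) := by
    obtain ⟨⟨x, hx, hs, hmax⟩, hub⟩ := isGreatest_sum_mul_binary_of_sum_le_one c
    refine (hnuHat 0 (.inl rfl)).unique ⟨⟨x, hx, by simpa using hs, ?_⟩, ?_⟩
    · rw [hvalue 0 x hx, hmax, mul_zero, zero_add]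
    rintro v ⟨xk, hxk, hs, rfl⟩
    rw [hvalue 0 xk hxk, mul_zero, zero_add]
    gcongr
    exact hub ⟨xk, hxk, by simpa using hs, rfl⟩
  rw [h1, h0, mul_div_mul_left _ _ hP.ne', ← exp_sub, log_exp]
end
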